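/- arXiv:1802.03147 — 6 statements merged into one kernel-verified Lean document; each statement's English description precedes it below -/
import Mathlib

section
/- (Corollary 2, OP part.) Let γ_{D^t,D^r}, γ_{A,D^r} > 0, p ∈ [0,1], β ∈ [0,1), r_t > 0. Under the one-CUE/one-D2D-pair random model below, P(R < r_t) = 1 − p·Ω − (1−p)·exp(−(2^{r_t/(1−β)} − 1)/γ_{D^t,D^r}), where Ω = exp(−(2^{r_t} − 1)/γ_{D^t,D^r}) / ( (γ_{A,D^r}/γ_{D^t,D^r})(2^{r_t} − 1) + 1 ). -/
open MeasureTheory ProbabilityTheory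

/-- Index type for the three independent random objects: the mode `M`, the D2D link SNR `X`
and the CUE interference SNR `Z`. -/
inductive IdxD where
  | M : IdxD
  | X : IdxD
  | Z : IdxD

/-- Codomain of each of the three random objects. -/
def IdxDT : IdxD → Type
  | .M => Bool
  | .X => ℝ
  | .Z => ℝ

instance (i : IdxD) : MeasurableSpace (IdxDT i) := by
  cases i <;> dsimp only [IdxDT] <;> infer_instance

/-- The family of the three random objects. -/
def idxDFam {Ω : Type*} (M : Ω → Bool) (X Z : Ω → ℝ) : (i : IdxD) → Ω → IdxDT i
  | .M => M
  | .X => X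
  | .Z => Z

/-! ### Auxiliary lemmas about the exponential measure -/

lemma expMeasure_apply' {r : ℝ} {s : Set ℝ} (hs : MeasurableSet s) :
    expMeasure r s = ∫⁻ x in s, exponentialPDF r x := by
  rw [expMeasure, gammaMeasure, withDensity_apply _ hs]
  rfl

lemma expMeasure_Iio_zero (r : ℝ) : expMeasure r (Set.Iio 0) = 0 := by
  rw [expMeasure_apply' measurableSet_Iio]
  exact lintegral_exponentialPDF_of_nonpos le_rfl

lemma expMeasure_Iic {r : ℝ} (hr : 0 < r) (t : ℝ) :
    expMeasure r (Set.Iic t)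
      = ENNReal.ofReal (if 0 ≤ t then 1 - Real.exp (-(r * t)) else 0) := by
  rw [expMeasure_apply' measurableSet_Iic]
  exact lintegral_exponentialPDF_eq_antiDeriv hr t

lemma expMeasure_Ici {r t : ℝ} (hr : 0 < r) (ht : 0 ≤ t) :
    expMeasure r (Set.Ici t) = ENNReal.ofReal (Real.exp (-(r * t))) := by
  have hP : IsProbabilityMeasure (expMeasure r) := isProbabilityMeasure_expMeasure hr
  have hsing : expMeasure r {t} = 0 := by
    rw [expMeasure_apply' (measurableSet_singleton t)]
    rw [Measure.restrict_eq_zero.mpr (by simp)]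
    simp
  have he1 : Real.exp (-(r * t)) ≤ 1 :=
    Real.exp_le_one_iff.mpr (by nlinarith)
  have hIoi : expMeasure r (Set.Ioi t) = ENNReal.ofReal (Real.exp (-(r * t))) := by
    have hc : Set.Ioi t = (Set.Iic t)ᶜ := Set.compl_Iic.symm
    rw [hc, measure_compl measurableSet_Iic (measure_ne_top _ _), expMeasure_Iic hr,
      if_pos ht, measure_univ]
    rw [← ENNReal.ofReal_one, ← ENNReal.ofReal_sub _ (by linarith)]
    norm_num
  have h1 : expMeasure r (Set.Ici t) ≤ expMeasure r (Set.Ioi t) := by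
    rw [← Set.Ioi_insert, ← Set.singleton_union]
    refine (measure_union_le _ _).trans ?_
    rw [hsing, zero_add]
  rw [← hIoi]
  exact le_antisymm h1 (measure_mono Set.Ioi_subset_Ici_self)

/-- The key product-measure computation:
`P(X ≥ c(Z+1)) = exp(-c/γD) / ((γA/γD) c + 1)` for independent exponentials. -/
lemma exp_pair_survival {γD γA c : ℝ} (hγD : 0 < γD) (hγA : 0 < γA) (hc : 0 ≤ c) :
    ((expMeasure (1/γD)).prod (expMeasure (1/γA))) {q : ℝ × ℝ | c * (q.2 + 1) ≤ q.1}
      = ENNReal.ofReal (Real.exp (-c / γD) / ((γA / γD) * c + 1)) := by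
  have hγD' : 0 < 1/γD := by positivity
  have hγA' : 0 < 1/γA := by positivity
  set s := c / γD with hs
  have hs0 : 0 ≤ s := by positivity
  set ρ := s + 1/γA with hρdef
  have hρ : 0 < ρ := by positivity
  have hPD : IsProbabilityMeasure (expMeasure (1/γD)) := isProbabilityMeasure_expMeasure hγD'
  have hPA : IsProbabilityMeasure (expMeasure (1/γA)) := isProbabilityMeasure_expMeasure hγA'
  have hS : MeasurableSet {q : ℝ × ℝ | c * (q.2 + 1) ≤ q.1} :=
    measurableSet_le (by fun_prop) (by fun_prop)
  rw [Measure.prod_apply_symm hS]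
  have hae : ∀ᵐ z ∂(expMeasure (1/γA)), 0 ≤ z := by
    rw [ae_iff]
    have : {z : ℝ | ¬ 0 ≤ z} = Set.Iio 0 := by ext z; simp
    rw [this]
    exact expMeasure_Iio_zero _
  have hcongr : ∫⁻ z, expMeasure (1/γD) ((fun x => (x, z)) ⁻¹' {q : ℝ × ℝ | c * (q.2 + 1) ≤ q.1})
        ∂(expMeasure (1/γA))
      = ∫⁻ z, ENNReal.ofReal (Real.exp (-(s * (z + 1)))) ∂(expMeasure (1/γA)) := by
    refine lintegral_congr_ae (hae.mono fun z hz => ?_)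
    beta_reduce
    have hpre : ((fun x => (x, z)) ⁻¹' {q : ℝ × ℝ | c * (q.2 + 1) ≤ q.1})
        = Set.Ici (c * (z + 1)) := rfl
    rw [hpre, expMeasure_Ici hγD' (by positivity)]
    congr 2
    rw [hs]
    field_simp
  rw [hcongr]
  have hwd : expMeasure (1/γA) = volume.withDensity (exponentialPDF (1/γA)) := rfl
  have hmeas_pdf : Measurable (exponentialPDF (1/γA)) :=
    (measurable_exponentialPDFReal (1/γA)).ennreal_ofReal
  have hmeas_g : Measurable (fun z : ℝ => ENNReal.ofReal (Real.exp (-(s * (z + 1))))) := by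
    fun_prop
  rw [hwd, lintegral_withDensity_eq_lintegral_mul _ hmeas_pdf hmeas_g]
  have hpt : ∀ z : ℝ,
      (exponentialPDF (1/γA) * fun z => ENNReal.ofReal (Real.exp (-(s * (z + 1))))) z
        = ENNReal.ofReal (Real.exp (-s) * ((1/γA) / ρ)) * exponentialPDF ρ z := by
    intro z
    simp only [Pi.mul_apply]
    rcases le_or_gt 0 z with hz | hz
    · rw [exponentialPDF_of_nonneg hz, exponentialPDF_of_nonneg hz,
        ← ENNReal.ofReal_mul (by positivity), ← ENNReal.ofReal_mul (by positivity)]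
      congr 1
      have hexp : Real.exp (-(1/γA * z)) * Real.exp (-(s * (z + 1)))
          = Real.exp (-s) * Real.exp (-(ρ * z)) := by
        rw [← Real.exp_add, ← Real.exp_add]
        congr 1
        rw [hρdef]
        ring
      calc (1/γA * Real.exp (-(1/γA * z))) * Real.exp (-(s * (z + 1)))
          = (Real.exp (-(1/γA * z)) * Real.exp (-(s * (z + 1)))) * (1/γA) := by ring
        _ = (Real.exp (-s) * Real.exp (-(ρ * z))) * (1/γA) := by rw [hexp]
        _ = Real.exp (-s) * ((1/γA) / ρ) * (ρ * Real.exp (-(ρ * z))) := by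
            field_simp
    · rw [exponentialPDF_of_neg hz, exponentialPDF_of_neg hz, zero_mul, mul_zero]
  rw [lintegral_congr hpt, lintegral_const_mul _ (show Measurable (exponentialPDF ρ) from (measurable_exponentialPDFReal ρ).ennreal_ofReal),
    lintegral_exponentialPDF_eq_one hρ, mul_one]
  congr 1
  rw [hρdef, hs, show -c / γD = -(c / γD) by ring]
  have h1 : c / γD + 1 / γA ≠ 0 := by positivity
  have h2 : γA / γD * c + 1 ≠ 0 := by positivity
  field_simp

lemma measure_eq_of_eq_off_null {Ω : Type*} [MeasurableSpace Ω] {μ : Measure Ω}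
    {S T N : Set Ω} (hN : μ N = 0) (h : S ∩ Nᶜ = T ∩ Nᶜ) : μ S = μ T := by
  have h1 : ∀ U : Set Ω, μ U = μ (U ∩ Nᶜ) := by
    intro U
    refine le_antisymm ?_ (measure_mono Set.inter_subset_left)
    calc μ U ≤ μ ((U ∩ Nᶜ) ∪ N) := by
          refine measure_mono fun x hx => ?_
          by_cases hxN : x ∈ N
          · exact Or.inr hxN
          · exact Or.inl ⟨hx, hxN⟩
      _ ≤ μ (U ∩ Nᶜ) + μ N := measure_union_le _ _
      _ = μ (U ∩ Nᶜ) := by rw [hN, add_zero]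
  rw [h1 S, h1 T, h]

set_option maxHeartbeats 1000000 in
theorem stmt_6 {Ω : Type*} [MeasurableSpace Ω] (μ : Measure Ω) [IsProbabilityMeasure μ]
    (γD γA : ℝ) (hγD : 0 < γD) (hγA : 0 < γA)
    (p β rt : ℝ) (hp : p ∈ Set.Icc (0 : ℝ) 1) (hβ : β ∈ Set.Ico (0 : ℝ) 1) (hrt : 0 < rt)
    (M : Ω → Bool) (X Z : Ω → ℝ)
    (hMm : Measurable M) (hXm : Measurable X) (hZm : Measurable Z)
    (hM : μ {ω | M ω = true} = ENNReal.ofReal p)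
    (hX : Measure.map X μ = expMeasure (1 / γD))
    (hZ : Measure.map Z μ = expMeasure (1 / γA))
    (hindep : iIndepFun (idxDFam M X Z) μ) :
    (μ {ω | (if M ω = true then Real.logb 2 (1 + X ω / (Z ω + 1))
        else (1 - β) * Real.logb 2 (1 + X ω)) < rt}).toReal
      = 1 - p * (Real.exp (-((2 : ℝ) ^ rt - 1) / γD) /
              ((γA / γD) * ((2 : ℝ) ^ rt - 1) + 1))
          - (1 - p) * Real.exp (-((2 : ℝ) ^ (rt / (1 - β)) - 1) / γD) := by
  obtain ⟨hp0, hp1⟩ := hp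
  obtain ⟨hβ0, hβ1⟩ := hβ
  have h1β : (0:ℝ) < 1 - β := by linarith
  have hγD' : (0:ℝ) < 1/γD := by positivity
  set c : ℝ := (2 : ℝ) ^ rt - 1 with hcdef
  set c' : ℝ := (2 : ℝ) ^ (rt / (1 - β)) - 1 with hc'def
  have hc : 0 < c := by
    have : (1:ℝ) < (2:ℝ) ^ rt :=
      (Real.one_lt_rpow_iff_of_pos (by norm_num)).mpr (Or.inl ⟨by norm_num, hrt⟩)
    simp only [hcdef]; linarith
  have hc' : 0 < c' := by
    have : (1:ℝ) < (2:ℝ) ^ (rt / (1 - β)) :=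
      (Real.one_lt_rpow_iff_of_pos (by norm_num)).mpr
        (Or.inl ⟨by norm_num, by positivity⟩)
    simp only [hc'def]; linarith
  -- abbreviations for the two survival probabilities
  set Ωv : ℝ := Real.exp (-c / γD) / ((γA / γD) * c + 1) with hΩvdef
  set E2 : ℝ := Real.exp (-c' / γD) with hE2def
  have hΩv0 : 0 ≤ Ωv := by
    rw [hΩvdef]
    positivity
  have hE20 : 0 ≤ E2 := Real.exp_nonneg _
  -- independence facts
  have hfam_meas : ∀ i, Measurable (idxDFam M X Z i) := by
    intro i; cases i
    · exact hMm
    · exact hXm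
    · exact hZm
  have hXZ : IndepFun X Z μ :=
    hindep.indepFun (i := IdxD.X) (j := IdxD.Z) (fun h => IdxD.noConfusion h)
  have hXM : IndepFun X M μ :=
    hindep.indepFun (i := IdxD.X) (j := IdxD.M) (fun h => IdxD.noConfusion h)
  have hPM : IndepFun (fun ω => (X ω, Z ω)) M μ :=
    hindep.indepFun_prodMk hfam_meas IdxD.X IdxD.Z IdxD.M
      (fun h => IdxD.noConfusion h) (fun h => IdxD.noConfusion h)
  -- the joint law of (X, Z)
  have hmapXZ : μ.map (fun ω => (X ω, Z ω)) = (expMeasure (1/γD)).prod (expMeasure (1/γA)) := by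
    rw [← hX, ← hZ]
    exact (indepFun_iff_map_prod_eq_prod_map_map hXm.aemeasurable hZm.aemeasurable).mp hXZ
  have hS : MeasurableSet {q : ℝ × ℝ | c * (q.2 + 1) ≤ q.1} :=
    measurableSet_le (by fun_prop) (by fun_prop)
  have hpairm : Measurable (fun ω => (X ω, Z ω)) := hXm.prodMk hZm
  -- survival probability of the underlay event
  have hsurv1 : μ ((fun ω => (X ω, Z ω)) ⁻¹' {q : ℝ × ℝ | c * (q.2 + 1) ≤ q.1})
      = ENNReal.ofReal Ωv := by
    rw [← Measure.map_apply hpairm hS, hmapXZ]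
    exact exp_pair_survival hγD hγA hc.le
  -- survival probability of the overlay event
  have hsurv2 : μ (X ⁻¹' Set.Ici c') = ENNReal.ofReal E2 := by
    rw [← Measure.map_apply hXm measurableSet_Ici, hX, expMeasure_Ici hγD' hc'.le]
    congr 1
    rw [hE2def]
    congr 1
    ring
  -- measures of the mode events
  have hMtrue : μ (M ⁻¹' {true}) = ENNReal.ofReal p := by
    have : M ⁻¹' {true} = {ω | M ω = true} := by ext ω; simp
    rw [this, hM]
  have hMfalse : μ (M ⁻¹' {false}) = ENNReal.ofReal (1 - p) := by
    have hcpl : M ⁻¹' {false} = (M ⁻¹' {true})ᶜ := by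
      ext ω; simp
    rw [hcpl, measure_compl (hMm (measurableSet_singleton true)) (measure_ne_top _ _),
      measure_univ, hMtrue, ← ENNReal.ofReal_one, ← ENNReal.ofReal_sub _ hp0]
  -- the two pieces of the complement event
  set A₁ : Set Ω := (fun ω => (X ω, Z ω)) ⁻¹' {q : ℝ × ℝ | c * (q.2 + 1) ≤ q.1} ∩ M ⁻¹' {true}
    with hA₁def
  set A₂ : Set Ω := X ⁻¹' Set.Ici c' ∩ M ⁻¹' {false} with hA₂def
  have hμA₁ : μ A₁ = ENNReal.ofReal Ωv * ENNReal.ofReal p := by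
    rw [hA₁def, hPM.measure_inter_preimage_eq_mul _ _ hS (measurableSet_singleton true),
      hsurv1, hMtrue]
  have hμA₂ : μ A₂ = ENNReal.ofReal E2 * ENNReal.ofReal (1 - p) := by
    rw [hA₂def, hXM.measure_inter_preimage_eq_mul _ _ measurableSet_Ici
      (measurableSet_singleton false), hsurv2, hMfalse]
  -- null set where X or Z is negative
  set N : Set Ω := {ω | X ω < 0} ∪ {ω | Z ω < 0} with hNdef
  have hNX : μ {ω | X ω < 0} = 0 := by
    have : {ω | X ω < 0} = X ⁻¹' Set.Iio 0 := rfl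
    rw [this, ← Measure.map_apply hXm measurableSet_Iio, hX]
    exact expMeasure_Iio_zero _
  have hNZ : μ {ω | Z ω < 0} = 0 := by
    have : {ω | Z ω < 0} = Z ⁻¹' Set.Iio 0 := rfl
    rw [this, ← Measure.map_apply hZm measurableSet_Iio, hZ]
    exact expMeasure_Iio_zero _
  have hN : μ N = 0 := by
    rw [hNdef]
    exact measure_union_null hNX hNZ
  -- the instantaneous rate function
  set F : Ω → ℝ := fun ω => if M ω = true then Real.logb 2 (1 + X ω / (Z ω + 1))
      else (1 - β) * Real.logb 2 (1 + X ω) with hFdef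
  have hFm : Measurable F := by
    rw [hFdef]
    refine Measurable.ite ?_ ?_ ?_
    · exact hMm (measurableSet_singleton true)
    · have h1 : Measurable (fun ω => 1 + X ω / (Z ω + 1)) := by fun_prop
      exact (Real.measurable_log.comp h1).div_const _
    · have h1 : Measurable (fun ω => 1 + X ω) := by fun_prop
      exact ((Real.measurable_log.comp h1).div_const _).const_mul _
  have hEcm : MeasurableSet {ω | rt ≤ F ω} := measurableSet_le measurable_const hFm
  -- the complement event equals A₁ ∪ A₂ off N
  have hkey : {ω | rt ≤ F ω} ∩ Nᶜ = (A₁ ∪ A₂) ∩ Nᶜ := by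
    ext ω
    simp only [Set.mem_inter_iff, Set.mem_setOf_eq, Set.mem_union, Set.mem_compl_iff,
      hNdef, hA₁def, hA₂def, Set.mem_preimage, Set.mem_singleton_iff, Set.mem_Ici,
      not_or, not_lt]
    constructor
    · rintro ⟨hle, hx0, hz0⟩
      refine ⟨?_, hx0, hz0⟩
      rw [hFdef] at hle
      rcases hMb : M ω with _ | _
      · right
        refine ⟨?_, rfl⟩
        simp only [hMb, Bool.false_eq_true, if_false] at hle
        have h2 : rt / (1 - β) ≤ Real.logb 2 (1 + X ω) := by
          rw [div_le_iff₀ h1β]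
          linarith [mul_comm (1 - β) (Real.logb 2 (1 + X ω))]
        rw [Real.le_logb_iff_rpow_le (by norm_num) (by linarith)] at h2
        simp only [hc'def]; linarith
      · left
        refine ⟨?_, rfl⟩
        simp only [hMb, if_true] at hle
        have hz1 : (0:ℝ) < Z ω + 1 := by linarith
        have hpos : (0:ℝ) < 1 + X ω / (Z ω + 1) := by positivity
        rw [Real.le_logb_iff_rpow_le (by norm_num) hpos] at hle
        have h2 : c ≤ X ω / (Z ω + 1) := by simp only [hcdef]; linarith
        rwa [le_div_iff₀ hz1] at h2
    · rintro ⟨hmem, hx0, hz0⟩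
      refine ⟨?_, hx0, hz0⟩
      rw [hFdef]
      rcases hmem with ⟨hle, hMb⟩ | ⟨hle, hMb⟩
      · simp only [hMb, if_true]
        have hz1 : (0:ℝ) < Z ω + 1 := by linarith
        have hpos : (0:ℝ) < 1 + X ω / (Z ω + 1) := by positivity
        rw [Real.le_logb_iff_rpow_le (by norm_num) hpos]
        have h2 : c ≤ X ω / (Z ω + 1) := (le_div_iff₀ hz1).mpr hle
        simp only [hcdef] at h2; linarith
      · simp only [hMb, Bool.false_eq_true, if_false]
        have h2 : (2:ℝ) ^ (rt / (1 - β)) ≤ 1 + X ω := by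
          simp only [hc'def] at hle; linarith
        rw [← Real.le_logb_iff_rpow_le (by norm_num) (by linarith)] at h2
        rw [div_le_iff₀ h1β] at h2
        linarith [mul_comm (Real.logb 2 (1 + X ω)) (1 - β)]
  have hdisj : Disjoint A₁ A₂ := by
    rw [Set.disjoint_left]
    rintro ω ⟨_, h1⟩ ⟨_, h2⟩
    simp only [Set.mem_preimage, Set.mem_singleton_iff] at h1 h2
    rw [h1] at h2
    exact Bool.noConfusion h2
  have hA₂m : MeasurableSet A₂ :=
    (hXm measurableSet_Ici).inter (hMm (measurableSet_singleton false))
  have hEc : μ {ω | rt ≤ F ω} = ENNReal.ofReal (Ωv * p + E2 * (1 - p)) := by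
    rw [measure_eq_of_eq_off_null hN hkey, measure_union hdisj hA₂m, hμA₁, hμA₂,
      ← ENNReal.ofReal_mul hΩv0, ← ENNReal.ofReal_mul hE20,
      ← ENNReal.ofReal_add (mul_nonneg hΩv0 hp0) (mul_nonneg hE20 (by linarith))]
  -- now finish
  have hEq : {ω | F ω < rt} = ({ω | rt ≤ F ω})ᶜ := by
    ext ω; simp [not_le]
  have hgoalset : {ω | (if M ω = true then Real.logb 2 (1 + X ω / (Z ω + 1))
      else (1 - β) * Real.logb 2 (1 + X ω)) < rt} = {ω | F ω < rt} := rfl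
  rw [hgoalset, hEq, prob_compl_eq_one_sub hEcm, hEc]
  have hle1 : ENNReal.ofReal (Ωv * p + E2 * (1 - p)) ≤ 1 := by
    rw [← hEc]
    exact prob_le_one
  rw [ENNReal.toReal_sub_of_le hle1 ENNReal.one_ne_top, ENNReal.toReal_one,
    ENNReal.toReal_ofReal (add_nonneg (mul_nonneg hΩv0 hp0) (mul_nonneg hE20 (by linarith)))]
  ring
end

section
/- (Corollary 2, AC part.) Let γ_{D^t,D^r}, γ_{A,D^r} > 0 with γ_{A,D^r} ≠ γ_{D^t,D^r}, let p ∈ [0,1] and β ∈ [0,1]. Under the one-CUE/one-D2D-pair random model below, E[R] = (1/ln 2)( p·( Ψ(1/γ_{D^t,D^r}) − Ψ(1/γ_{A,D^r}) ) / ( γ_{A,D^r}/γ_{D^t,D^r} − 1 ) − (1−p)(1−β)·Ψ(1/γ_{D^t,D^r}) ). -/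
open MeasureTheory ProbabilityTheory

/-- `Psi x = eˣ Ei(-x) = -∫_0^∞ e^{-u}/(u+x) du`. -/
noncomputable def Psi (x : ℝ) : ℝ := -∫ u in Set.Ioi (0 : ℝ), Real.exp (-u) / (u + x)

/-!
Write `a = 1/γ_{D^t,D^r}` and `b = 1/γ_{A,D^r}` for the rates of `X` and `Z`. Since `M` is
independent of `(X, Z)`, the expected capacity splits as `p · E[log(1 + X/(Z+1))]` plus
`(1-p)(1-β) · E[log(1 + X)]`. Both expectations come from the layer-cake formula
`E[log(1 + Y)] = ∫₀^∞ P(Y > t)/(1 + t) dt`, using the tails `P(X > t) = e^{-at}` and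
`P(X > t(Z+1)) = e^{-at} · b/(b + at)` (the latter is `e^{-at}` times the Laplace transform of `Z`
at `at`). The substitution `u = at` gives `∫₀^∞ e^{-at}/(1+t) dt = -Ψ(a)`, and partial fractions
in `t` reduce the second integral to the same kind of integral.
-/

open Real Set Filter
open scoped ENNReal

section PsiIntegrals

variable {a b : ℝ}

lemma integrableOn_mul_exp_neg_mul_div_add (ha : 0 < a) (hb : 0 < b) :
    IntegrableOn (fun t => a * exp (-(a * t)) / (b + a * t)) (Ioi 0) := by
  refine ((exp_neg_integrableOn_Ioi 0 ha).const_mul (a / b)).mono'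
    (by fun_prop : Measurable fun t => a * exp (-(a * t)) / (b + a * t)).aestronglyMeasurable ?_
  filter_upwards [ae_restrict_mem measurableSet_Ioi] with t (ht : 0 < t)
  rw [norm_of_nonneg (by positivity), neg_mul, mul_div_right_comm]
  gcongr
  linarith [mul_pos ha ht]

lemma integral_mul_exp_neg_mul_div_add (ha : 0 < a) :
    ∫ t in Ioi 0, a * exp (-(a * t)) / (b + a * t) = -Psi b := by
  have h := integral_comp_mul_left_Ioi (fun u => exp (-u) / (u + b)) 0 ha
  simp only [mul_zero, smul_eq_mul] at h
  calc ∫ t in Ioi 0, a * exp (-(a * t)) / (b + a * t)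
      = a * ∫ t in Ioi 0, exp (-(a * t)) / (a * t + b) := by
        rw [← integral_const_mul]
        simp only [mul_div_assoc, add_comm b]
    _ = -Psi b := by rw [h, Psi, neg_neg, mul_inv_cancel_left₀ ha.ne']

lemma mul_exp_neg_mul_div_self_add (ha : 0 < a) :
    (fun t => a * exp (-(a * t)) / (a + a * t)) = fun t => exp (-(a * t)) / (1 + t) := by
  ext t
  rw [← mul_one_add, mul_div_mul_left _ _ ha.ne']

lemma integrableOn_exp_neg_mul_div_one_add (ha : 0 < a) :
    IntegrableOn (fun t => exp (-(a * t)) / (1 + t)) (Ioi 0) :=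
  mul_exp_neg_mul_div_self_add ha ▸ integrableOn_mul_exp_neg_mul_div_add ha ha

lemma integral_exp_neg_mul_div_one_add (ha : 0 < a) :
    ∫ t in Ioi 0, exp (-(a * t)) / (1 + t) = -Psi a := by
  rw [← mul_exp_neg_mul_div_self_add ha, integral_mul_exp_neg_mul_div_add ha]

lemma exp_neg_mul_mul_div_add_div_one_add_eq (hab : a ≠ b) {t : ℝ} (h1 : 1 + t ≠ 0)
    (h2 : b + a * t ≠ 0) :
    exp (-(a * t)) * b / (b + a * t) / (1 + t)
      = b / (b - a) * (exp (-(a * t)) / (1 + t))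
        - b / (b - a) * (a * exp (-(a * t)) / (b + a * t)) := by
  have h3 : b - a ≠ 0 := sub_ne_zero.2 hab.symm
  field_simp
  ring

lemma integrableOn_exp_neg_mul_mul_div_add_div_one_add (ha : 0 < a) (hb : 0 < b) (hab : a ≠ b) :
    IntegrableOn (fun t => exp (-(a * t)) * b / (b + a * t) / (1 + t)) (Ioi 0) := by
  refine IntegrableOn.congr_fun (((integrableOn_exp_neg_mul_div_one_add ha).const_mul
    (b / (b - a))).sub ((integrableOn_mul_exp_neg_mul_div_add ha hb).const_mul (b / (b - a))))
    (fun t (ht : 0 < t) => ?_) measurableSet_Ioi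
  exact (exp_neg_mul_mul_div_add_div_one_add_eq hab (by positivity) (by positivity)).symm

lemma integral_exp_neg_mul_mul_div_add_div_one_add (ha : 0 < a) (hb : 0 < b) (hab : a ≠ b) :
    ∫ t in Ioi 0, exp (-(a * t)) * b / (b + a * t) / (1 + t) = (Psi a - Psi b) / (a / b - 1) := by
  rw [setIntegral_congr_fun measurableSet_Ioi fun t (ht : 0 < t) =>
      exp_neg_mul_mul_div_add_div_one_add_eq hab (by positivity) (by positivity),
    integral_sub ((integrableOn_exp_neg_mul_div_one_add ha).const_mul _)
      ((integrableOn_mul_exp_neg_mul_div_add ha hb).const_mul _),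
    integral_const_mul, integral_const_mul, integral_exp_neg_mul_div_one_add ha,
    integral_mul_exp_neg_mul_div_add ha]
  have h1 : b - a ≠ 0 := sub_ne_zero.2 hab.symm
  have h2 : a - b ≠ 0 := sub_ne_zero.2 hab
  field_simp
  ring

end PsiIntegrals

lemma intervalIntegral_inv_one_add {x : ℝ} (hx : 0 ≤ x) :
    ∫ t in (0 : ℝ)..x, (1 + t)⁻¹ = log (1 + x) := by
  rw [intervalIntegral.integral_comp_add_left (fun t => t⁻¹), integral_inv, add_zero, div_one]
  rw [uIcc_of_le (by linarith)]
  exact fun h => by linarith [h.1]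

theorem integral_log_one_add_eq_of_tail {α : Type*} [MeasurableSpace α] {μ : Measure α}
    {f : α → ℝ} {G : ℝ → ℝ} (hf_nn : 0 ≤ᵐ[μ] f) (hf : AEMeasurable f μ)
    (hG_nn : ∀ t ∈ Ioi (0 : ℝ), 0 ≤ G t)
    (hG : ∀ t ∈ Ioi (0 : ℝ), μ {a | t < f a} = ENNReal.ofReal (G t))
    (hint : IntegrableOn (fun t => G t / (1 + t)) (Ioi 0)) :
    Integrable (fun a => log (1 + f a)) μ ∧
      ∫ a, log (1 + f a) ∂μ = ∫ t in Ioi 0, G t / (1 + t) := by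
  have hlog_nn : 0 ≤ᵐ[μ] fun a => log (1 + f a) := by
    filter_upwards [hf_nn] with a ha
    exact log_nonneg (by simp only [Pi.zero_apply] at ha; linarith)
  have hmeas : AEStronglyMeasurable (fun a => log (1 + f a)) μ :=
    (measurable_log.comp_aemeasurable (hf.const_add 1)).aestronglyMeasurable
  have hlint : ∫⁻ a, ENNReal.ofReal (log (1 + f a)) ∂μ
      = ENNReal.ofReal (∫ t in Ioi 0, G t / (1 + t)) := by
    have hcake := lintegral_comp_eq_lintegral_meas_lt_mul μ hf_nn hf (g := fun t => (1 + t)⁻¹)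
      (fun t ht => by
        refine (continuousOn_const.add continuousOn_id).inv₀ ?_ |>.intervalIntegrable
        intro s hs
        rw [uIcc_of_le ht.le] at hs
        exact (by linarith [hs.1] : (0 : ℝ) < 1 + s).ne')
      ((ae_restrict_iff' measurableSet_Ioi).2 (ae_of_all _ fun t (ht : 0 < t) => by positivity))
    rw [ofReal_integral_eq_lintegral_ofReal hint
      ((ae_restrict_iff' measurableSet_Ioi).2 (ae_of_all _ fun t (ht : 0 < t) =>
        div_nonneg (hG_nn t ht) (by positivity)))]
    calc ∫⁻ a, ENNReal.ofReal (log (1 + f a)) ∂μ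
        = ∫⁻ a, ENNReal.ofReal (∫ t in (0 : ℝ)..f a, (1 + t)⁻¹) ∂μ := by
          refine lintegral_congr_ae ?_
          filter_upwards [hf_nn] with a ha
          rw [intervalIntegral_inv_one_add ha]
      _ = ∫⁻ t in Ioi 0, μ {a | t < f a} * ENNReal.ofReal (1 + t)⁻¹ := hcake
      _ = ∫⁻ t in Ioi 0, ENNReal.ofReal (G t / (1 + t)) := by
          refine setLIntegral_congr_fun measurableSet_Ioi fun t (ht : 0 < t) => ?_
          rw [hG t ht, div_eq_mul_inv, ENNReal.ofReal_mul (hG_nn t ht)]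
  refine ⟨⟨hmeas, ?_⟩, ?_⟩
  · rw [hasFiniteIntegral_iff_ofReal hlog_nn, hlint]
    exact ENNReal.ofReal_lt_top
  · rw [integral_eq_lintegral_of_nonneg_ae hlog_nn hmeas, hlint, ENNReal.toReal_ofReal
      (setIntegral_nonneg measurableSet_Ioi fun t (ht : 0 < t) =>
        div_nonneg (hG_nn t ht) (by positivity))]

lemma lintegral_expMeasure {r : ℝ} {f : ℝ → ℝ≥0∞} (hf : Measurable f) :
    ∫⁻ x, f x ∂expMeasure r = ∫⁻ x in Ici 0, ENNReal.ofReal (r * exp (-(r * x))) * f x := by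
  have hpdf : Measurable (gammaPDF 1 r) := (measurable_exponentialPDFReal r).ennreal_ofReal
  rw [expMeasure, gammaMeasure, lintegral_withDensity_eq_lintegral_mul _ hpdf hf,
    ← lintegral_indicator measurableSet_Ici]
  refine lintegral_congr fun x => ?_
  rcases lt_or_ge x 0 with hx | hx
  · rw [indicator_of_notMem (by simpa using hx), Pi.mul_apply,
      show gammaPDF 1 r x = exponentialPDF r x from rfl, exponentialPDF_of_neg hx, zero_mul]
  · rw [indicator_of_mem (mem_Ici.2 hx), Pi.mul_apply,
      show gammaPDF 1 r x = exponentialPDF r x from rfl, exponentialPDF_of_nonneg hx]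

lemma expMeasure_Ioi {r x : ℝ} (hr : 0 < r) (hx : 0 ≤ x) :
    expMeasure r (Ioi x) = ENNReal.ofReal (exp (-(r * x))) := by
  have := isProbabilityMeasure_expMeasure hr
  have hle : exp (-(r * x)) ≤ 1 := exp_le_one_iff.2 (by nlinarith)
  rw [← compl_Iic, prob_compl_eq_one_sub measurableSet_Iic, ← ofReal_cdf, cdf_expMeasure_eq hr,
    if_pos hx, ← ENNReal.ofReal_one, ← ENNReal.ofReal_sub _ (by linarith), sub_sub_cancel]

lemma lintegral_exp_neg_mul_expMeasure {r s : ℝ} (hr : 0 < r) (hs : 0 ≤ s) :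
    ∫⁻ z, ENNReal.ofReal (exp (-(s * z))) ∂expMeasure r = ENNReal.ofReal (r / (r + s)) := by
  have hrs : 0 < r + s := by linarith
  have hint : IntegrableOn (fun z => r * exp (-(r + s) * z)) (Ici 0) := by
    rw [integrableOn_Ici_iff_integrableOn_Ioi]
    exact (exp_neg_integrableOn_Ioi 0 hrs).const_mul r
  rw [lintegral_expMeasure (by fun_prop)]
  calc ∫⁻ z in Ici 0, ENNReal.ofReal (r * exp (-(r * z))) * ENNReal.ofReal (exp (-(s * z)))
      = ∫⁻ z in Ici 0, ENNReal.ofReal (r * exp (-(r + s) * z)) := by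
        refine lintegral_congr fun z => ?_
        rw [← ENNReal.ofReal_mul (by positivity), mul_assoc, ← exp_add]
        ring_nf
    _ = ENNReal.ofReal (r / (r + s)) := by
        rw [← ofReal_integral_eq_lintegral_ofReal hint (ae_of_all _ fun z => by positivity),
          integral_const_mul, integral_Ici_eq_integral_Ioi,
          integral_exp_mul_Ioi (by linarith), mul_zero, exp_zero, neg_div_neg_eq, mul_one_div]

lemma ae_nonneg_expMeasure {r : ℝ} (hr : 0 < r) : ∀ᵐ z ∂expMeasure r, 0 ≤ z := by
  have := isProbabilityMeasure_expMeasure hr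
  refine measure_mono_null (fun z (hz : ¬ 0 ≤ z) => mem_Iic.2 (not_le.1 hz).le) ?_
  rw [← ofReal_cdf, cdf_expMeasure_eq hr, if_pos le_rfl, mul_zero, neg_zero, exp_zero, sub_self,
    ENNReal.ofReal_zero]

lemma prod_expMeasure_lt_div_add_one {a b t : ℝ} (ha : 0 < a) (hb : 0 < b) (ht : 0 ≤ t) :
    (expMeasure a).prod (expMeasure b) {q | t < q.1 / (q.2 + 1)}
      = ENNReal.ofReal (exp (-(a * t)) * b / (b + a * t)) := by
  have := isProbabilityMeasure_expMeasure ha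
  have := isProbabilityMeasure_expMeasure hb
  rw [Measure.prod_apply_symm (measurableSet_lt measurable_const (by fun_prop))]
  calc ∫⁻ z, expMeasure a ((fun x => (x, z)) ⁻¹' {q | t < q.1 / (q.2 + 1)}) ∂expMeasure b
      = ∫⁻ z, ENNReal.ofReal (exp (-(a * t))) * ENNReal.ofReal (exp (-(a * t * z)))
          ∂expMeasure b := by
        refine lintegral_congr_ae ?_
        filter_upwards [ae_nonneg_expMeasure hb] with z hz
        have hslice :
            (fun x => (x, z)) ⁻¹' {q : ℝ × ℝ | t < q.1 / (q.2 + 1)} = Ioi (t * (z + 1)) := by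
          ext x
          simp only [mem_preimage, mem_ofPred_eq, mem_Ioi, lt_div_iff₀ (by linarith : 0 < z + 1)]
        rw [hslice, expMeasure_Ioi ha (by positivity), ← ENNReal.ofReal_mul (exp_pos _).le,
          ← exp_add]
        ring_nf
    _ = ENNReal.ofReal (exp (-(a * t)) * b / (b + a * t)) := by
        rw [lintegral_const_mul _ (by fun_prop),
          lintegral_exp_neg_mul_expMeasure hb (by positivity), ← ENNReal.ofReal_mul (exp_pos _).le,
          mul_div_assoc]

section Expectations

variable {Ω : Type*} [MeasurableSpace Ω] {μ : Measure Ω} {a b : ℝ}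

lemma ae_nonneg_of_map_eq_expMeasure {X : Ω → ℝ} (hX : AEMeasurable X μ)
    (hlaw : μ.map X = expMeasure a) (ha : 0 < a) : 0 ≤ᵐ[μ] X :=
  ae_of_ae_map (p := fun x => 0 ≤ x) hX (hlaw ▸ ae_nonneg_expMeasure ha)

theorem integral_log_one_add_of_map_eq_expMeasure {X : Ω → ℝ} (hX : Measurable X)
    (hlaw : μ.map X = expMeasure a) (ha : 0 < a) :
    Integrable (fun ω => log (1 + X ω)) μ ∧ ∫ ω, log (1 + X ω) ∂μ = -Psi a := by
  have hint := integral_log_one_add_eq_of_tail (G := fun t => exp (-(a * t)))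
    (ae_nonneg_of_map_eq_expMeasure hX.aemeasurable hlaw ha) hX.aemeasurable
    (fun t _ => (exp_pos _).le)
    (fun t (ht : 0 < t) => by
      rw [← expMeasure_Ioi ha ht.le, ← hlaw, Measure.map_apply hX measurableSet_Ioi]
      rfl)
    (integrableOn_exp_neg_mul_div_one_add ha)
  exact ⟨hint.1, hint.2.trans (integral_exp_neg_mul_div_one_add ha)⟩

theorem integral_log_one_add_div_add_one_of_indepFun [IsFiniteMeasure μ] {X Z : Ω → ℝ}
    (hX : Measurable X) (hZ : Measurable Z) (hXZ : IndepFun X Z μ) (hlawX : μ.map X = expMeasure a)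
    (hlawZ : μ.map Z = expMeasure b) (ha : 0 < a) (hb : 0 < b) (hab : a ≠ b) :
    Integrable (fun ω => log (1 + X ω / (Z ω + 1))) μ ∧
      ∫ ω, log (1 + X ω / (Z ω + 1)) ∂μ = (Psi a - Psi b) / (a / b - 1) := by
  have hlaw : μ.map (fun ω => (X ω, Z ω)) = (expMeasure a).prod (expMeasure b) := by
    rw [← hlawX, ← hlawZ]
    exact (indepFun_iff_map_prod_eq_prod_map_map hX.aemeasurable hZ.aemeasurable).1 hXZ
  have hnn : 0 ≤ᵐ[μ] fun ω => X ω / (Z ω + 1) := by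
    filter_upwards [ae_nonneg_of_map_eq_expMeasure hX.aemeasurable hlawX ha,
      ae_nonneg_of_map_eq_expMeasure hZ.aemeasurable hlawZ hb] with ω hXω hZω
    exact div_nonneg hXω (by simp only [Pi.zero_apply] at hZω; linarith)
  have hint := integral_log_one_add_eq_of_tail (G := fun t => exp (-(a * t)) * b / (b + a * t))
    hnn (by fun_prop) (fun t (ht : 0 < t) => by positivity)
    (fun t (ht : 0 < t) => by
      rw [← prod_expMeasure_lt_div_add_one ha hb ht.le, ← hlaw,
        Measure.map_apply (hX.prodMk hZ) (measurableSet_lt measurable_const (by fun_prop))]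
      rfl)
    (integrableOn_exp_neg_mul_mul_div_add_div_one_add ha hb hab)
  exact ⟨hint.1, hint.2.trans (integral_exp_neg_mul_mul_div_add_div_one_add ha hb hab)⟩

theorem integral_ite_eq_of_indepFun {E : Type*} [MeasurableSpace E] {M : Ω → Bool} {V : Ω → E}
    (hM : Measurable M) (hV : AEMeasurable V μ) (hind : IndepFun M V μ) {F G : E → ℝ}
    (hF : Measurable F) (hG : Measurable G)
    (hFi : Integrable (fun ω => F (V ω)) μ) (hGi : Integrable (fun ω => G (V ω)) μ) :
    ∫ ω, (if M ω = true then F (V ω) else G (V ω)) ∂μ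
      = μ.real {ω | M ω = true} * ∫ ω, F (V ω) ∂μ
        + μ.real {ω | M ω = true}ᶜ * ∫ ω, G (V ω) ∂μ := by
  have hA : MeasurableSet[MeasurableSpace.comap M inferInstance] {ω | M ω = true} :=
    ⟨{true}, measurableSet_singleton _, rfl⟩
  have hindep := (IndepFun_iff_Indep M V μ).1 hind
  rw [← hindep.setIntegral_eq_mul hM.comap_le hV hA hF.aestronglyMeasurable,
    ← hindep.setIntegral_eq_mul hM.comap_le hV hA.compl hG.aestronglyMeasurable,
    ← integral_piecewise (hM.comap_le _ hA) hFi.integrableOn hGi.integrableOn]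
  rfl

end Expectations

theorem stmt_7_general {Ω : Type*} [MeasurableSpace Ω] (μ : Measure Ω) [IsProbabilityMeasure μ]
    (γD γA : ℝ) (hγD : 0 < γD) (hγA : 0 < γA) (hne : γA ≠ γD)
    (p β : ℝ) (hp : p ∈ Set.Icc (0 : ℝ) 1)
    (M : Ω → Bool) (X Z : Ω → ℝ)
    (hMm : Measurable M) (hXm : Measurable X) (hZm : Measurable Z)
    (hM : μ {ω | M ω = true} = ENNReal.ofReal p)
    (hX : Measure.map X μ = expMeasure (1 / γD))
    (hZ : Measure.map Z μ = expMeasure (1 / γA))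
    (hindep : iIndepFun (idxDFam M X Z) μ) :
    ∫ ω, (if M ω = true then Real.logb 2 (1 + X ω / (Z ω + 1))
        else (1 - β) * Real.logb 2 (1 + X ω)) ∂μ
      = (1 / Real.log 2) *
          (p * (Psi (1 / γD) - Psi (1 / γA)) / (γA / γD - 1)
            - (1 - p) * (1 - β) * Psi (1 / γD)) := by
  have hfam : ∀ i, Measurable (idxDFam M X Z i) := by
    rintro (_ | _ | _)
    exacts [hMm, hXm, hZm]
  have hMV : IndepFun M (fun ω => (X ω, Z ω)) μ :=
    (hindep.indepFun_prodMk hfam .X .Z .M nofun nofun).symm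
  have hXZ : IndepFun X Z μ := hindep.indepFun (i := .X) (j := .Z) nofun
  have hab : 1 / γD ≠ 1 / γA := fun h => hne (by field_simp at h; linarith)
  obtain ⟨hUi, hU⟩ := integral_log_one_add_div_add_one_of_indepFun hXm hZm hXZ hX hZ
    (by positivity) (by positivity) hab
  obtain ⟨hOi, hO⟩ := integral_log_one_add_of_map_eq_expMeasure hXm hX (by positivity)
  rw [integral_ite_eq_of_indepFun hMm (hXm.prodMk hZm).aemeasurable hMV
      (F := fun q => logb 2 (1 + q.1 / (q.2 + 1))) (G := fun q => (1 - β) * logb 2 (1 + q.1))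
      (by unfold logb; fun_prop) (by unfold logb; fun_prop) (hUi.div_const _)
      ((hOi.div_const _).const_mul _)]
  simp only [logb, integral_div, integral_const_mul, hU, hO]
  have hs : MeasurableSet {ω | M ω = true} := hMm (measurableSet_singleton true)
  rw [measureReal_compl hs, probReal_univ, measureReal_def, hM,
    ENNReal.toReal_ofReal hp.1]
  field_simp
  ring

theorem stmt_7 {Ω : Type*} [MeasurableSpace Ω] (μ : Measure Ω) [IsProbabilityMeasure μ]
    (γD γA : ℝ) (hγD : 0 < γD) (hγA : 0 < γA) (hne : γA ≠ γD)
    (p β : ℝ) (hp : p ∈ Set.Icc (0 : ℝ) 1) (hβ : β ∈ Set.Icc (0 : ℝ) 1)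
    (M : Ω → Bool) (X Z : Ω → ℝ)
    (hMm : Measurable M) (hXm : Measurable X) (hZm : Measurable Z)
    (hM : μ {ω | M ω = true} = ENNReal.ofReal p)
    (hX : Measure.map X μ = expMeasure (1 / γD))
    (hZ : Measure.map Z μ = expMeasure (1 / γA))
    (hindep : iIndepFun (idxDFam M X Z) μ) :
    ∫ ω, (if M ω = true then Real.logb 2 (1 + X ω / (Z ω + 1))
        else (1 - β) * Real.logb 2 (1 + X ω)) ∂μ
      = (1 / Real.log 2) *
          (p * (Psi (1 / γD) - Psi (1 / γA)) / (γA / γD - 1)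
            - (1 - p) * (1 - β) * Psi (1 / γD)) :=
  stmt_7_general μ γD γA hγD hγA hne p β hp M X Z hMm hXm hZm hM hX hZ hindep
end

section
/- (Lemma 1, abstract form.) Let A > 0, B > 0, V > 0 and U ∈ ℝ with U + V > 0, and let w_c, w_d > 0 with w_c + w_d = 1. Define 𝒰(β) = w_c ln(Aβ + B) + w_d ln(Uβ + V) for β ∈ [0,1] (note Uβ + V > 0 for all β ∈ [0,1]). Then: (i) if U ≥ 0, then 𝒰(β) ≤ 𝒰(1) for all β ∈ [0,1]; (ii) if U < 0, then with β* = min{ max{ 0, −w_d·B/A − w_c·V/U }, 1 }, we have 𝒰(β) ≤ 𝒰(β*) for all β ∈ [0,1]. -/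
theorem stmt_8 (A B V U wc wd : ℝ) (hA : 0 < A) (hB : 0 < B) (hV : 0 < V)
    (hUV : 0 < U + V) (hwc : 0 < wc) (hwd : 0 < wd) (hw : wc + wd = 1) :
    (0 ≤ U → ∀ β ∈ Set.Icc (0 : ℝ) 1,
      wc * Real.log (A * β + B) + wd * Real.log (U * β + V)
        ≤ wc * Real.log (A * 1 + B) + wd * Real.log (U * 1 + V)) ∧
    (U < 0 → ∀ β ∈ Set.Icc (0 : ℝ) 1,
      wc * Real.log (A * β + B) + wd * Real.log (U * β + V)
        ≤ wc * Real.log (A * min (max 0 (-(wd * (B / A)) - wc * (V / U))) 1 + B)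
          + wd * Real.log (U * min (max 0 (-(wd * (B / A)) - wc * (V / U))) 1 + V)) := by
  set f : ℝ → ℝ := fun β => wc * Real.log (A * β + B) + wd * Real.log (U * β + V) with hf
  have hpos : ∀ x ∈ Set.Icc (0:ℝ) 1, 0 < A * x + B ∧ 0 < U * x + V := by
    intro x hx
    obtain ⟨hx0, hx1⟩ := hx
    refine ⟨by nlinarith, ?_⟩
    rcases le_or_gt 0 U with h | h
    · nlinarith
    · nlinarith [mul_nonneg (neg_nonneg.2 h.le) (sub_nonneg.2 hx1)]
  have hderiv : ∀ x ∈ Set.Icc (0:ℝ) 1,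
      HasDerivAt f (wc * A / (A * x + B) + wd * U / (U * x + V)) x := by
    intro x hx
    obtain ⟨h1, h2⟩ := hpos x hx
    have hl1 : HasDerivAt (fun β : ℝ => A * β + B) A x := by
      simpa using ((hasDerivAt_id x).const_mul A).add_const B
    have hl2 : HasDerivAt (fun β : ℝ => U * β + V) U x := by
      simpa using ((hasDerivAt_id x).const_mul U).add_const V
    have hlog1 := (Real.hasDerivAt_log h1.ne').comp x hl1
    have hlog2 := (Real.hasDerivAt_log h2.ne').comp x hl2
    have := (hlog1.const_mul wc).add (hlog2.const_mul wd)
    refine this.congr_deriv ?_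
    simp only [div_eq_mul_inv]; ring
  have hcont : ContinuousOn f (Set.Icc 0 1) := fun x hx =>
    ((hderiv x hx).differentiableAt).continuousAt.continuousWithinAt
  constructor
  · -- Case U ≥ 0 : f is monotone on [0,1]
    intro hU β hβ
    have hmono : MonotoneOn f (Set.Icc 0 1) := by
      apply monotoneOn_of_deriv_nonneg (convex_Icc 0 1) hcont
      · intro x hx
        rw [interior_Icc] at hx
        exact ((hderiv x (Set.Ioo_subset_Icc_self hx)).differentiableAt).differentiableWithinAt
      · intro x hx
        rw [interior_Icc] at hx
        have hx' := Set.Ioo_subset_Icc_self hx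
        obtain ⟨h1, h2⟩ := hpos x hx'
        rw [(hderiv x hx').deriv]
        have t1 : 0 ≤ wc * A / (A * x + B) := by positivity
        have t2 : 0 ≤ wd * U / (U * x + V) := by
          apply div_nonneg _ h2.le
          exact mul_nonneg hwd.le hU
        linarith
    exact hmono hβ (Set.mem_Icc.2 ⟨zero_le_one, le_refl 1⟩) hβ.2
  · -- Case U < 0
    intro hU β hβ
    set β0 : ℝ := -(wd * (B / A)) - wc * (V / U) with hβ0
    set βs : ℝ := min (max 0 β0) 1 with hβs
    have hβs01 : βs ∈ Set.Icc (0:ℝ) 1 :=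
      ⟨le_min (le_max_left 0 β0) zero_le_one, min_le_right _ _⟩
    have hAUβ0 : A * U * β0 = -(wd * U * B) - wc * A * V := by
      rw [hβ0]; field_simp [hU.ne]
    -- numerator identity
    have hnum : ∀ x : ℝ, wc * A * (U * x + V) + wd * U * (A * x + B)
        = A * U * (x - β0) := by
      intro x
      have : A * U * (x - β0) = A * U * x - A * U * β0 := by ring
      rw [this, hAUβ0]
      linear_combination A * U * x * hw
    have hderiv_eq : ∀ x ∈ Set.Icc (0:ℝ) 1,
        wc * A / (A * x + B) + wd * U / (U * x + V)
          = (A * U * (x - β0)) / ((A * x + B) * (U * x + V)) := by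
      intro x hx
      obtain ⟨h1, h2⟩ := hpos x hx
      rw [div_add_div _ _ h1.ne' h2.ne', ← hnum x]
      ring_nf
    have hmono : MonotoneOn f (Set.Icc 0 βs) := by
      apply monotoneOn_of_deriv_nonneg (convex_Icc 0 βs)
        (hcont.mono (Set.Icc_subset_Icc le_rfl hβs01.2))
      · intro x hx
        rw [interior_Icc] at hx
        have hx' : x ∈ Set.Icc (0:ℝ) 1 := ⟨hx.1.le, hx.2.le.trans hβs01.2⟩
        exact ((hderiv x hx').differentiableAt).differentiableWithinAt
      · intro x hx
        rw [interior_Icc] at hx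
        have hx' : x ∈ Set.Icc (0:ℝ) 1 := ⟨hx.1.le, hx.2.le.trans hβs01.2⟩
        obtain ⟨h1, h2⟩ := hpos x hx'
        have hxβ0 : x ≤ β0 := by
          have h3 : x < max 0 β0 := lt_of_lt_of_le hx.2 (min_le_left _ _)
          rcases le_or_gt β0 0 with h | h
          · rw [max_eq_left h] at h3; linarith [hx.1]
          · rw [max_eq_right h.le] at h3; exact h3.le
        rw [(hderiv x hx').deriv, hderiv_eq x hx']
        apply div_nonneg _ (mul_pos h1 h2).le
        have : A * U ≤ 0 := mul_nonpos_of_nonneg_of_nonpos hA.le hU.le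
        nlinarith
    have hanti : AntitoneOn f (Set.Icc βs 1) := by
      apply antitoneOn_of_deriv_nonpos (convex_Icc βs 1)
        (hcont.mono (Set.Icc_subset_Icc hβs01.1 le_rfl))
      · intro x hx
        rw [interior_Icc] at hx
        have hx' : x ∈ Set.Icc (0:ℝ) 1 := ⟨hβs01.1.trans hx.1.le, hx.2.le⟩
        exact ((hderiv x hx').differentiableAt).differentiableWithinAt
      · intro x hx
        rw [interior_Icc] at hx
        have hx' : x ∈ Set.Icc (0:ℝ) 1 := ⟨hβs01.1.trans hx.1.le, hx.2.le⟩
        obtain ⟨h1, h2⟩ := hpos x hx'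
        have hβ0x : β0 ≤ x := by
          have h3 : βs < x := hx.1
          rcases le_or_gt (max 0 β0) 1 with h | h
          · have : βs = max 0 β0 := min_eq_left h
            rw [this] at h3
            exact (le_max_right 0 β0).trans h3.le
          · have : βs = 1 := min_eq_right h.le
            rw [this] at h3; linarith [hx.2]
        rw [(hderiv x hx').deriv, hderiv_eq x hx']
        apply div_nonpos_of_nonpos_of_nonneg _ (mul_pos h1 h2).le
        have : A * U ≤ 0 := mul_nonpos_of_nonneg_of_nonpos hA.le hU.le
        nlinarith
    rcases le_or_gt β βs with h | h
    · exact hmono ⟨hβ.1, h⟩ ⟨hβs01.1, le_rfl⟩ h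
    · exact hanti ⟨le_rfl, hβs01.2⟩ ⟨h.le, hβ.2⟩ h.le
end

section
/- (Lemma 2, case 1.) Let μ > 0, ν ∈ (0,1), w_c, w_d > 0 with w_c + w_d = 1, and assume μ + ν > 1 and w_c/μ < w_d/ν. Define f(p,β) = w_c ln(pμ + (1−p)β) + w_d ln(pν + (1−p)(1−β)). Let p* = min{ w_c/(1−ν), 1 }. Then for all (p,β) ∈ [0,1]² with pμ + (1−p)β > 0 and pν + (1−p)(1−β) > 0, we have f(p,β) ≤ f(p*, 0). -/
/-!
Since `wc log x + wd log y` is concave in the rates, `f(p, β) ≤ f(p*, 0)` follows from its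
tangent-plane bound at the rates `(X, Y)` of `(p*, 0)`, once `wc x / X + wd y / Y ≤ 1` for the rates `(x, y)` of `(p, β)`.
If `wc < 1 - ν`, then `(X, Y) = (wc μ / (1 - ν), wd)` and this reads
`(1 - ν) x + μ y ≤ μ`, whose defect is `(1 - p) β (μ + ν - 1) ≥ 0`. Otherwise `(X, Y) = (μ, ν)`, the
left side is `p + (1 - p) (β wc / μ + (1 - β) wd / ν)`, and `wc / μ < wd / ν ≤ 1`.
-/

open Real Set

/-- The objective `f(p, β)`. -/
noncomputable def fairUtility (μ ν wc wd p β : ℝ) : ℝ :=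
  wc * log (p * μ + (1 - p) * β) + wd * log (p * ν + (1 - p) * (1 - β))

lemma mul_log_add_mul_log_le {a b x y X Y : ℝ} (ha : 0 ≤ a) (hb : 0 ≤ b)
    (hx : 0 < x) (hy : 0 < y) (hX : 0 < X) (hY : 0 < Y)
    (h : a * (x / X) + b * (y / Y) ≤ a + b) :
    a * log x + b * log y ≤ a * log X + b * log Y := by
  have hx' : log x - log X ≤ x / X - 1 := by
    rw [← log_div hx.ne' hX.ne']; exact log_le_sub_one_of_pos (div_pos hx hX)
  have hy' : log y - log Y ≤ y / Y - 1 := by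
    rw [← log_div hy.ne' hY.ne']; exact log_le_sub_one_of_pos (div_pos hy hY)
  linarith [mul_le_mul_of_nonneg_left hx' ha, mul_le_mul_of_nonneg_left hy' hb]

section

variable {μ ν wc wd p β : ℝ}

lemma fairUtility_le_div_one_sub_zero (hμ : 0 < μ) (hwc : 0 < wc) (hwd : 0 < wd)
    (hw : wc + wd = 1) (hν : ν < 1) (hgain : 1 < μ + ν) (hp : p ≤ 1) (hβ : 0 ≤ β)
    (hx : 0 < p * μ + (1 - p) * β) (hy : 0 < p * ν + (1 - p) * (1 - β)) :
    fairUtility μ ν wc wd p β ≤ fairUtility μ ν wc wd (wc / (1 - ν)) 0 := by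
  have hν1 : 0 < 1 - ν := sub_pos.2 hν
  have hY : wc / (1 - ν) * ν + (1 - wc / (1 - ν)) * (1 - 0) = wd := by
    rw [eq_sub_of_add_eq' hw]; field_simp; ring
  have hX : 0 < wc / (1 - ν) * μ + (1 - wc / (1 - ν)) * 0 := by
    simp only [mul_zero, add_zero]; positivity
  have hcomb : (1 - ν) * (p * μ + (1 - p) * β) + μ * (p * ν + (1 - p) * (1 - β)) ≤ μ := by
    linarith [mul_nonneg (mul_nonneg (sub_nonneg.2 hp) hβ) (sub_nonneg.2 hgain.le)]
  refine mul_log_add_mul_log_le hwc.le hwd.le hx hy hX (hY ▸ hwd) ?_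
  have hlin : wc * ((p * μ + (1 - p) * β) / (wc / (1 - ν) * μ + (1 - wc / (1 - ν)) * 0))
      = (1 - ν) * (p * μ + (1 - p) * β) / μ := by
    field_simp; ring
  rw [hY, mul_div_cancel₀ _ hwd.ne', hw, hlin, div_add' _ _ _ hμ.ne', div_le_one hμ]
  linarith

lemma fairUtility_le_one_zero (hμ : 0 < μ) (hν : 0 < ν) (hwc : 0 ≤ wc) (hwd : 0 ≤ wd)
    (hw : wc + wd = 1) (hratio : wc / μ ≤ wd / ν) (hcut : wd ≤ ν)
    (hp : p ≤ 1) (hβ : β ∈ Icc (0 : ℝ) 1)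
    (hx : 0 < p * μ + (1 - p) * β) (hy : 0 < p * ν + (1 - p) * (1 - β)) :
    fairUtility μ ν wc wd p β ≤ fairUtility μ ν wc wd 1 0 := by
  have hdν : wd / ν ≤ 1 := (div_le_one hν).mpr hcut
  have hlin : wc * ((p * μ + (1 - p) * β) / μ) + wd * ((p * ν + (1 - p) * (1 - β)) / ν)
      = p * (wc + wd) + (1 - p) * (β * (wc / μ) + (1 - β) * (wd / ν)) := by
    field_simp; ring
  have hcμ : wc / μ ≤ 1 := hratio.trans hdν
  refine mul_log_add_mul_log_le hwc hwd hx hy (by simpa using hμ) (by simpa using hν) ?_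
  simp only [one_mul, sub_self, zero_mul, add_zero]
  rw [hlin, hw]
  obtain ⟨hβ0, hβ1⟩ := hβ
  have hmix : β * (wc / μ) + (1 - β) * (wd / ν) ≤ 1 := by
    linarith [mul_le_mul_of_nonneg_left hcμ hβ0, mul_le_mul_of_nonneg_left hdν (sub_nonneg.2 hβ1)]
  linarith [mul_le_mul_of_nonneg_left hmix (sub_nonneg.2 hp)]

end

theorem stmt_9 (μ ν wc wd : ℝ) (hμ : 0 < μ) (hν : ν ∈ Set.Ioo (0 : ℝ) 1)
    (hwc : 0 < wc) (hwd : 0 < wd) (hw : wc + wd = 1)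
    (hgain : 1 < μ + ν) (hratio : wc / μ < wd / ν) :
    ∀ p ∈ Set.Icc (0 : ℝ) 1, ∀ β ∈ Set.Icc (0 : ℝ) 1,
      0 < p * μ + (1 - p) * β → 0 < p * ν + (1 - p) * (1 - β) →
      wc * Real.log (p * μ + (1 - p) * β) + wd * Real.log (p * ν + (1 - p) * (1 - β))
        ≤ wc * Real.log (min (wc / (1 - ν)) 1 * μ + (1 - min (wc / (1 - ν)) 1) * 0)
          + wd * Real.log (min (wc / (1 - ν)) 1 * ν + (1 - min (wc / (1 - ν)) 1) * (1 - 0)) := by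
  intro p hp β hβ hx hy
  change fairUtility μ ν wc wd p β ≤ fairUtility μ ν wc wd (min (wc / (1 - ν)) 1) 0
  have hν1 : 0 < 1 - ν := sub_pos.2 hν.2
  rcases lt_or_ge wc (1 - ν) with hcut | hcut
  · rw [min_eq_left ((div_le_one hν1).2 hcut.le)]
    exact fairUtility_le_div_one_sub_zero hμ hwc hwd hw hν.2 hgain hp.2 hβ.1 hx hy
  · rw [min_eq_right ((one_le_div hν1).2 hcut)]
    exact fairUtility_le_one_zero hμ hν.1 hwc.le hwd.le hw hratio.le (by linarith) hp.2 hβ hx hy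
end

section
/- (Lemma 2, case 2 with μ ≥ 1.) Let μ ≥ 1, ν ∈ (0,1), w_c, w_d > 0 with w_c + w_d = 1, and assume w_c/μ ≥ w_d/ν. Define f(p,β) = w_c ln(pμ + (1−p)β) + w_d ln(pν + (1−p)(1−β)). Then for all (p,β) ∈ [0,1]² with pμ + (1−p)β > 0 and pν + (1−p)(1−β) > 0, we have f(p,β) ≤ w_c ln μ + w_d ln ν; i.e., the maximum is attained at p = 1 with arbitrary β ∈ [0,1]. -/
/-! Normalise the rates `A = pμ + (1 - p)β` and `B = pν + (1 - p)(1 - β)` by their values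
at `p = 1`. The weighted sum `wc · A/μ + wd · B/ν` of the normalised rates is affine in `p` and equals
`p + (1 - p)(β wc/μ + (1 - β) wd/ν)`, which is at most `1` because `wd/ν ≤ wc/μ ≤ 1`.
Concavity of `log` then gives `wc log (A/μ) + wd log (B/ν) ≤ log 1 = 0`. -/

open Real Set

lemma mul_log_add_mul_log_nonpos {a b x y : ℝ} (ha : 0 ≤ a) (hb : 0 ≤ b) (hab : a + b = 1)
    (hx : 0 < x) (hy : 0 < y) (hxy : a * x + b * y ≤ 1) :
    a * log x + b * log y ≤ 0 :=
  calc a * log x + b * log y ≤ log (a * x + b * y) :=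
        strictConcaveOn_log_Ioi.concaveOn.2 hx hy ha hb hab
    _ ≤ log 1 := log_le_log (convex_Ioi (0 : ℝ) hx hy ha hb hab) hxy
    _ = 0 := log_one

lemma weighted_normalized_rates_le_one {μ ν wc wd p β : ℝ} (hμ : 0 < μ) (hν : 0 < ν)
    (hw : wc + wd = 1) (hwcμ : wc / μ ≤ 1) (hratio : wd / ν ≤ wc / μ)
    (hp : p ∈ Icc (0 : ℝ) 1) (hβ : β ∈ Icc (0 : ℝ) 1) :
    wc * ((p * μ + (1 - p) * β) / μ) + wd * ((p * ν + (1 - p) * (1 - β)) / ν) ≤ 1 := by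
  obtain ⟨hp0, hp1⟩ := hp
  obtain ⟨hβ0, hβ1⟩ := hβ
  have haffine : wc * ((p * μ + (1 - p) * β) / μ) + wd * ((p * ν + (1 - p) * (1 - β)) / ν)
      = p * (wc + wd) + (1 - p) * (β * (wc / μ) + (1 - β) * (wd / ν)) := by
    field_simp
    ring
  have hmix : β * (wc / μ) + (1 - β) * (wd / ν) ≤ 1 := by nlinarith
  rw [haffine, hw]
  nlinarith

theorem stmt_11 (μ ν wc wd : ℝ) (hμ : 1 ≤ μ) (hν : ν ∈ Set.Ioo (0 : ℝ) 1)
    (hwc : 0 < wc) (hwd : 0 < wd) (hw : wc + wd = 1)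
    (hratio : wd / ν ≤ wc / μ) :
    ∀ p ∈ Set.Icc (0 : ℝ) 1, ∀ β ∈ Set.Icc (0 : ℝ) 1,
      0 < p * μ + (1 - p) * β → 0 < p * ν + (1 - p) * (1 - β) →
      wc * Real.log (p * μ + (1 - p) * β) + wd * Real.log (p * ν + (1 - p) * (1 - β))
        ≤ wc * Real.log μ + wd * Real.log ν := by
  intro p hp β hβ hA hB
  have hμ0 : 0 < μ := by linarith
  have hν0 : 0 < ν := hν.1
  have hwcμ : wc / μ ≤ 1 := (div_le_one hμ0).2 (by linarith)
  have hlog := mul_log_add_mul_log_nonpos hwc.le hwd.le hw (div_pos hA hμ0) (div_pos hB hν0)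
    (weighted_normalized_rates_le_one hμ0 hν0 hw hwcμ hratio hp hβ)
  rw [log_div hA.ne' hμ0.ne', log_div hB.ne' hν0.ne'] at hlog
  linarith
end

section
/- (Lemma 2, case 3.) Let μ > 0, ν ∈ (0,1), w_c, w_d > 0 with w_c + w_d = 1, and assume μ + ν ≤ 1. e f(p,β) = w_c ln(pμ + (1−p)β) + w_d ln(pν + (1−p)(1−β)). Then for all (p,β) ∈ [0,1]² with pμ + (1−p)β > 0 and pν + (1−p)(1−β) > 0, we have f(p,β) ≤ f(0, w_c) = w_c ln w_c + w_d ln w_d. -/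
/-!
Since `μ + ν ≤ 1`, the two rates always sum to at most `1`. By concavity of `log`,
`wc log (x / wc) + wd log (y / wd) ≤ log (x + y) ≤ 0` for any such pair `(x, y)`, which is
Gibbs' inequality `wc log x + wd log y ≤ wc log wc + wd log wd`; equality holds at `(0, wc)`.
-/

open Real

theorem mul_log_add_mul_log_le_of_add_le_one {a b x y : ℝ} (ha : 0 < a) (hb : 0 < b)
    (hab : a + b = 1) (hx : 0 < x) (hy : 0 < y) (hxy : x + y ≤ 1) :
    a * log x + b * log y ≤ a * log a + b * log b := by
  have jensen : a * log (x / a) + b * log (y / b) ≤ log (a * (x / a) + b * (y / b)) :=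
    strictConcaveOn_log_Ioi.concaveOn.2 (div_pos hx ha) (div_pos hy hb) ha.le hb.le hab
  have hsum : a * (x / a) + b * (y / b) = x + y := by field_simp
  have log_sum_nonpos : log (x + y) ≤ 0 := log_nonpos (by positivity) hxy
  rw [hsum, log_div hx.ne' ha.ne', log_div hy.ne' hb.ne'] at jensen
  linarith

theorem mix_add_mix_le_one {p μ ν β : ℝ} (hp : p ∈ Set.Icc (0 : ℝ) 1) (hgain : μ + ν ≤ 1) :
    p * μ + (1 - p) * β + (p * ν + (1 - p) * (1 - β)) ≤ 1 := by
  nlinarith [hp.1]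

theorem stmt_12_general (μ ν wc wd : ℝ)
    (hwc : 0 < wc) (hwd : 0 < wd) (hw : wc + wd = 1)
    (hgain : μ + ν ≤ 1) :
    (∀ p ∈ Set.Icc (0 : ℝ) 1, ∀ β ∈ Set.Icc (0 : ℝ) 1,
      0 < p * μ + (1 - p) * β → 0 < p * ν + (1 - p) * (1 - β) →
      wc * Real.log (p * μ + (1 - p) * β) + wd * Real.log (p * ν + (1 - p) * (1 - β))
        ≤ wc * Real.log (0 * μ + (1 - 0) * wc) + wd * Real.log (0 * ν + (1 - 0) * (1 - wc))) ∧
    wc * Real.log (0 * μ + (1 - 0) * wc) + wd * Real.log (0 * ν + (1 - 0) * (1 - wc))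
      = wc * Real.log wc + wd * Real.log wd := by
  have value_at_optimum :
      wc * log (0 * μ + (1 - 0) * wc) + wd * log (0 * ν + (1 - 0) * (1 - wc))
        = wc * log wc + wd * log wd := by
    rw [show 1 - wc = wd by linarith]
    simp
  refine ⟨fun p hp β _ hx hy => ?_, value_at_optimum⟩
  rw [value_at_optimum]
  exact mul_log_add_mul_log_le_of_add_le_one hwc hwd hw hx hy (mix_add_mix_le_one hp hgain)

theorem stmt_12 (μ ν wc wd : ℝ) (hμ : 0 < μ) (hν : ν ∈ Set.Ioo (0 : ℝ) 1)
    (hwc : 0 < wc) (hwd : 0 < wd) (hw : wc + wd = 1)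
    (hgain : μ + ν ≤ 1) :
    (∀ p ∈ Set.Icc (0 : ℝ) 1, ∀ β ∈ Set.Icc (0 : ℝ) 1,
      0 < p * μ + (1 - p) * β → 0 < p * ν + (1 - p) * (1 - β) →
      wc * Real.log (p * μ + (1 - p) * β) + wd * Real.log (p * ν + (1 - p) * (1 - β))
        ≤ wc * Real.log (0 * μ + (1 - 0) * wc) + wd * Real.log (0 * ν + (1 - 0) * (1 - wc))) ∧
    wc * Real.log (0 * μ + (1 - 0) * wc) + wd * Real.log (0 * ν + (1 - 0) * (1 - wc))
      = wc * Real.log wc + wd * Real.log wd :=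
  stmt_12_general μ ν wc wd hwc hwd hw hgain
end
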